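/- Let (I,μ) be a marked ideal of maximal order with μ > 1, i.e. D^μ(I) = (1). Then the homogenized ideal of the derivative contains the derivative of the homogenized ideal: D(H(I,μ)) ⊆ H(D(I,μ)), where H(J,ν) := Σ_{i=0}^{ν−1} D^i(J)·(D^{ν−1}(J))^i for a marked ideal (J,ν). -/

import Mathlib

open MvPolynomial

/-- The first derivative ideal: generated by `I` and all first partial derivatives of
elements of `I`. -/
noncomputable def derivIdeal {K : Type*} [CommRing K] {n : ℕ}
    (I : Ideal (MvPolynomial (Fin n) K)) : Ideal (MvPolynomial (Fin n) K) :=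
  I ⊔ Ideal.span {g | ∃ f ∈ I, ∃ i : Fin n, g = pderiv i f}

/-- The `k`-th iterated derivative ideal. -/
noncomputable def derivIdealIter {K : Type*} [CommRing K] {n : ℕ} (k : ℕ)
    (I : Ideal (MvPolynomial (Fin n) K)) : Ideal (MvPolynomial (Fin n) K) :=
  derivIdeal^[k] I

/-- The homogenization `H(J,ν) = Σ_{i=0}^{ν−1} D^i(J)·(D^{ν−1}(J))^i` of a marked ideal
`(J,ν)`. -/
noncomputable def homog {K : Type*} [CommRing K] {n : ℕ} (ν : ℕ)
    (J : Ideal (MvPolynomial (Fin n) K)) : Ideal (MvPolynomial (Fin n) K) :=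
  ∑ i ∈ Finset.range ν, derivIdealIter i J * derivIdealIter (ν - 1) J ^ i

/-!
Write `T = D^{μ-1}(I)`, so that `D(T) = (1)` by maximality and `D^{μ-2}(D(I)) = T`; thus
`H(D(I), μ-1) = Σ_{j<μ-1} D^{j+1}(I)·T^j`. The Leibniz rule gives `D(A·B) ⊆ D(A)·B + A·D(B)`
and `D(T^{i+1}) ⊆ D(T)·T^i = T^i`, so the derivative of the summand `D^i(I)·T^i` of `H(I,μ)`
lies in `D^{i+1}(I)·T^i + D^i(I)·T^{i-1}`. Every such product `D^{j+1}(I)·T^j` with `j ≤ μ-1`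
lies in `H(D(I), μ-1)`: for `j < μ-1` it is a summand, and for `j = μ-1` it equals
`T^{μ-1} = T·T^{μ-2}`, the summand with `j = μ-2`.
-/

section DerivIdeal

variable {K : Type*} [CommRing K] {n : ℕ}

lemma le_derivIdeal (I : Ideal (MvPolynomial (Fin n) K)) : I ≤ derivIdeal I := le_sup_left

lemma pderiv_mem_derivIdeal {I : Ideal (MvPolynomial (Fin n) K)} {f : MvPolynomial (Fin n) K}
    (hf : f ∈ I) (i : Fin n) : pderiv i f ∈ derivIdeal I :=
  (le_sup_right : _ ≤ derivIdeal I) (Ideal.subset_span ⟨f, hf, i, rfl⟩)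

lemma derivIdeal_le {I J : Ideal (MvPolynomial (Fin n) K)} (hle : I ≤ J)
    (hpderiv : ∀ f ∈ I, ∀ i : Fin n, pderiv i f ∈ J) : derivIdeal I ≤ J := by
  refine sup_le hle (Ideal.span_le.mpr ?_)
  rintro _ ⟨f, hf, i, rfl⟩
  exact hpderiv f hf i

lemma derivIdeal_bot : derivIdeal (⊥ : Ideal (MvPolynomial (Fin n) K)) = ⊥ :=
  le_bot_iff.mp <| derivIdeal_le le_rfl fun f hf i => by
    rw [Ideal.mem_bot.mp hf, map_zero]
    exact zero_mem _

lemma derivIdeal_add_le (A B : Ideal (MvPolynomial (Fin n) K)) :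
    derivIdeal (A + B) ≤ derivIdeal A + derivIdeal B := by
  refine derivIdeal_le (add_le_add (le_derivIdeal A) (le_derivIdeal B)) fun f hf i => ?_
  obtain ⟨a, ha, b, hb, rfl⟩ := Submodule.mem_sup.mp hf
  rw [map_add]
  exact add_mem (Submodule.mem_sup_left (pderiv_mem_derivIdeal ha i))
    (Submodule.mem_sup_right (pderiv_mem_derivIdeal hb i))

lemma derivIdeal_sum_le {ι : Type*} (s : Finset ι) (A : ι → Ideal (MvPolynomial (Fin n) K)) :
    derivIdeal (∑ i ∈ s, A i) ≤ ∑ i ∈ s, derivIdeal (A i) :=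
  Finset.le_sum_of_subadditive _ derivIdeal_bot.le derivIdeal_add_le s A

lemma derivIdeal_mul_le (A B : Ideal (MvPolynomial (Fin n) K)) :
    derivIdeal (A * B) ≤ derivIdeal A * B + A * derivIdeal B := by
  refine derivIdeal_le ((Ideal.mul_mono_left (le_derivIdeal A)).trans le_sup_left)
    fun f hf i => Submodule.mul_induction_on hf (fun a ha b hb => ?_) fun x y hx hy => ?_
  · rw [pderiv_mul]
    exact add_mem (Submodule.mem_sup_left (Ideal.mul_mem_mul (pderiv_mem_derivIdeal ha i) hb))
      (Submodule.mem_sup_right (Ideal.mul_mem_mul ha (pderiv_mem_derivIdeal hb i)))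
  · rw [map_add]
    exact add_mem hx hy

lemma derivIdeal_pow_succ_le (A : Ideal (MvPolynomial (Fin n) K)) (k : ℕ) :
    derivIdeal (A ^ (k + 1)) ≤ derivIdeal A * A ^ k := by
  induction k with
  | zero => simp
  | succ k ih =>
    calc derivIdeal (A ^ (k + 1) * A)
        ≤ derivIdeal (A ^ (k + 1)) * A + A ^ (k + 1) * derivIdeal A := derivIdeal_mul_le _ _
      _ ≤ derivIdeal A * A ^ k * A + A ^ (k + 1) * derivIdeal A := by gcongr
      _ = derivIdeal A * A ^ (k + 1) := by rw [mul_assoc, ← pow_succ, mul_comm _ (derivIdeal A),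
            add_idem]

lemma derivIdealIter_succ' (k : ℕ) (I : Ideal (MvPolynomial (Fin n) K)) :
    derivIdealIter (k + 1) I = derivIdeal (derivIdealIter k I) :=
  Function.iterate_succ_apply' _ _ _

lemma derivIdealIter_succ (k : ℕ) (I : Ideal (MvPolynomial (Fin n) K)) :
    derivIdealIter (k + 1) I = derivIdealIter k (derivIdeal I) :=
  Function.iterate_succ_apply _ _ _

lemma homog_derivIdeal (ν : ℕ) (I : Ideal (MvPolynomial (Fin n) K)) :
    homog ν (derivIdeal I) =
      ∑ j ∈ Finset.range ν, derivIdealIter (j + 1) I * derivIdealIter ν I ^ j := by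
  refine Finset.sum_congr rfl fun j hj => ?_
  obtain ⟨ν, rfl⟩ : ∃ m, ν = m + 1 := ⟨ν - 1, by grind⟩
  rw [Nat.add_sub_cancel, ← derivIdealIter_succ, ← derivIdealIter_succ]

lemma derivIdealIter_succ_mul_pow_le_homog_derivIdeal_of_lt (I : Ideal (MvPolynomial (Fin n) K))
    {ν j : ℕ} (hj : j < ν) :
    derivIdealIter (j + 1) I * derivIdealIter ν I ^ j ≤ homog ν (derivIdeal I) := by
  rw [homog_derivIdeal]
  exact Finset.single_le_sum_of_canonicallyOrdered
    (f := fun j => derivIdealIter (j + 1) I * derivIdealIter ν I ^ j) (Finset.mem_range.mpr hj)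

lemma derivIdealIter_succ_mul_pow_le_homog_derivIdeal {I : Ideal (MvPolynomial (Fin n) K)}
    {ν : ℕ} (hν : 0 < ν) (hmax : derivIdealIter (ν + 1) I = ⊤) {j : ℕ} (hj : j ≤ ν) :
    derivIdealIter (j + 1) I * derivIdealIter ν I ^ j ≤ homog ν (derivIdeal I) := by
  rcases hj.lt_or_eq with hj | rfl
  · exact derivIdealIter_succ_mul_pow_le_homog_derivIdeal_of_lt I hj
  obtain ⟨m, rfl⟩ : ∃ m, j = m + 1 := ⟨j - 1, by omega⟩
  calc derivIdealIter (m + 1 + 1) I * derivIdealIter (m + 1) I ^ (m + 1)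
      = derivIdealIter (m + 1) I * derivIdealIter (m + 1) I ^ m := by
        rw [hmax, Ideal.top_mul, pow_succ']
    _ ≤ _ := derivIdealIter_succ_mul_pow_le_homog_derivIdeal_of_lt I m.lt_succ_self

lemma derivIdeal_homog_succ_le_homog_derivIdeal {I : Ideal (MvPolynomial (Fin n) K)}
    {ν : ℕ} (hν : 0 < ν) (hmax : derivIdealIter (ν + 1) I = ⊤) :
    derivIdeal (homog (ν + 1) I) ≤ homog ν (derivIdeal I) := by
  set T := derivIdealIter ν I
  have hT : derivIdeal T = ⊤ := by rw [← derivIdealIter_succ', hmax]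
  have key {j : ℕ} (hj : j ≤ ν) := derivIdealIter_succ_mul_pow_le_homog_derivIdeal hν hmax hj
  rw [homog, Nat.add_sub_cancel]
  refine (derivIdeal_sum_le _ _).trans ?_
  rw [Ideal.sum_eq_sup]
  refine Finset.sup_le fun i hi => ?_
  have hiν : i ≤ ν := Nat.lt_succ_iff.mp (Finset.mem_range.mp hi)
  cases i with
  | zero => simpa [← derivIdealIter_succ'] using key hiν
  | succ k =>
    calc derivIdeal (derivIdealIter (k + 1) I * T ^ (k + 1))
        ≤ derivIdealIter (k + 1 + 1) I * T ^ (k + 1) +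
            derivIdealIter (k + 1) I * derivIdeal (T ^ (k + 1)) := by
          rw [derivIdealIter_succ' (k + 1)]
          exact derivIdeal_mul_le _ _
      _ ≤ derivIdealIter (k + 1 + 1) I * T ^ (k + 1) + derivIdealIter (k + 1) I * T ^ k := by
          grw [derivIdeal_pow_succ_le, hT, Ideal.top_mul]
      _ ≤ homog ν (derivIdeal I) := add_le (key hiν) (key (by omega))

end DerivIdeal

theorem stmt_9_general {K : Type*} [Field K] {n : ℕ}
    (I : Ideal (MvPolynomial (Fin n) K)) (μ : ℕ) (hμ : 1 < μ)
    (hmax : derivIdealIter μ I = ⊤) :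
    derivIdeal (homog μ I) ≤ homog (μ - 1) (derivIdeal I) := by
  obtain ⟨ν, rfl⟩ : ∃ ν, μ = ν + 1 := ⟨μ - 1, by omega⟩
  exact derivIdeal_homog_succ_le_homog_derivIdeal (by omega) hmax

/-- For a marked ideal `(I,μ)` of maximal order with `μ > 1`, the derivative of the
homogenized ideal is contained in the homogenized ideal of the derivative:
`D(H(I,μ)) ⊆ H(D(I,μ)) = H(D(I), μ−1)`. -/
theorem stmt_9 {K : Type*} [Field K] [CharZero K] {n : ℕ}
    (I : Ideal (MvPolynomial (Fin n) K)) (μ : ℕ) (hμ : 1 < μ)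
    (hmax : derivIdealIter μ I = ⊤) :
    derivIdeal (homog μ I) ≤ homog (μ - 1) (derivIdeal I) :=
  stmt_9_general I μ hμ hmax
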